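/- arXiv:math/0612173 — 3 statements merged into one kernel-verified Lean document; each statement's English description precedes it below -/
import Mathlib

section
/- For λ ∈ ℂ∖ℝ with M₊(λ) = -1/λ + 1/√(-λ) and M₋(λ) = -1/λ - 1/√λ, the following resolvent-type bound holds: 4·|Im(-1/λ)| / (|Im λ|·|1/√(-λ) + 1/√λ|) ≤ 2√2/|λ|^{3/2}. -/
/-!
Since `(√(-λ))² = -(√λ)²`, we have `√(-λ) = ±i√λ`, hence
`|1/√(-λ) + 1/√λ| = |1 ∓ i| / |λ|^{1/2} = √2 / |λ|^{1/2}`. Together with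
`|Im(-1/λ)| = |Im λ| / |λ|²` the bound holds with equality.
-/

/-- Branch of `√(-z)` holomorphic on `ℂ ∖ [0,∞)`, positive on `(-∞,0)`. -/
noncomputable def sqrtNeg (z : ℂ) : ℂ := Complex.exp (Complex.log (-z) / 2)

/-- Principal branch of `√z`, holomorphic on `ℂ ∖ (-∞,0]`, positive on `(0,∞)`. -/
noncomputable def sqrtP (z : ℂ) : ℂ := Complex.exp (Complex.log z / 2)

open Complex

lemma exp_log_div_two_sq {w : ℂ} (hw : w ≠ 0) : exp (log w / 2) ^ 2 = w := by
  rw [← exp_nat_mul, Nat.cast_ofNat, mul_div_cancel₀ _ two_ne_zero, exp_log hw]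

lemma sqrtP_sq {z : ℂ} (hz : z ≠ 0) : sqrtP z ^ 2 = z := exp_log_div_two_sq hz

lemma sqrtNeg_sq {z : ℂ} (hz : z ≠ 0) : sqrtNeg z ^ 2 = -z := exp_log_div_two_sq (neg_ne_zero.2 hz)

lemma norm_eq_sqrt_norm_of_sq_eq {b z : ℂ} (h : b ^ 2 = z) : ‖b‖ = √‖z‖ := by
  rw [← h, norm_pow, Real.sqrt_sq (norm_nonneg b)]

lemma norm_one_sub_of_sq_eq_neg_one {c : ℂ} (hc : c ^ 2 = -1) : ‖1 - c‖ = √2 := by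
  have hI : (c - I) * (c + I) = 0 := by linear_combination hc - I_sq
  rcases mul_eq_zero.1 hI with h | h
  · rw [sub_eq_zero.1 h, norm_def, normSq_apply]; norm_num
  · rw [eq_neg_of_add_eq_zero_left h, norm_def, normSq_apply]; norm_num

lemma norm_one_div_add_one_div_of_sq_add_sq_eq_zero {a b : ℂ} (hb : b ≠ 0)
    (h : a ^ 2 + b ^ 2 = 0) : ‖1 / a + 1 / b‖ = √2 / ‖b‖ := by
  have ha : a ≠ 0 := by rintro rfl; simp [hb] at h
  have hc : (a / b) ^ 2 = -1 := by
    rw [div_pow, eq_neg_of_add_eq_zero_left h, neg_div, div_self (pow_ne_zero 2 hb)]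
  have hsum : 1 / a + 1 / b = (1 - a / b) / b := by
    field_simp
    linear_combination h
  rw [hsum, norm_div, norm_one_sub_of_sq_eq_neg_one hc]

lemma abs_im_neg_one_div (z : ℂ) : |(-1 / z).im| = |z.im| / ‖z‖ ^ 2 := by
  rw [neg_div, neg_im, one_div, inv_im, neg_div, neg_neg, ← normSq_eq_norm_sq, abs_div,
    abs_of_nonneg (normSq_nonneg z)]

/-- For `λ ∈ ℂ∖ℝ`:  `4·|Im(-1/λ)| / (|Im λ|·|1/√(-λ)+1/√λ|) ≤ 2√2/|λ|^{3/2}`. -/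
theorem stmt_3 (z : ℂ) (hz : z.im ≠ 0) :
    4 * |(-1 / z).im| / (|z.im| * ‖1 / sqrtNeg z + 1 / sqrtP z‖) ≤
      2 * Real.sqrt 2 / ‖z‖ ^ ((3 : ℝ) / 2) := by
  have hz0 : z ≠ 0 := fun h => hz (by simp [h])
  have hb : sqrtP z ≠ 0 := exp_ne_zero _
  have hsq : sqrtNeg z ^ 2 + sqrtP z ^ 2 = 0 := by rw [sqrtNeg_sq hz0, sqrtP_sq hz0]; ring
  rw [abs_im_neg_one_div, norm_one_div_add_one_div_of_sq_add_sq_eq_zero hb hsq,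
    norm_eq_sqrt_norm_of_sq_eq (sqrtP_sq hz0), show (3 : ℝ) / 2 = 1 + 1 / 2 by norm_num,
    Real.rpow_add (norm_pos_iff.2 hz0), Real.rpow_one, ← Real.sqrt_eq_rpow]
  set r := √‖z‖
  have hr : 0 < r := Real.sqrt_pos.2 (norm_pos_iff.2 hz0)
  rw [← Real.sq_sqrt (norm_nonneg z)]
  have hs : 0 < |z.im| := abs_pos.2 hz
  have h2 : √2 ^ 2 = 2 := Real.sq_sqrt zero_le_two
  apply le_of_eq
  field_simp
  linear_combination -2 * r ^ 2 * h2
end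

section
/- For the function m(λ) = -1/λ + 1/√(-λ) - 1/(-λ + √(-λ)), one has for y > 0: Im m(iy) ≥ 1/y, Re m(iy) = (1+√(y/2))/(1+y+√(2y)), and consequently Im m(iy)/Re m(iy) → +∞ as y → 0+. -/
open Filter Real Set

/-- `m(λ) = -1/λ + 1/√(-λ) - 1/(-λ + √(-λ))`. -/
noncomputable def mFun (z : ℂ) : ℂ := -1 / z + 1 / sqrtNeg z - 1 / (-z + sqrtNeg z)

lemma sqrtNeg_I_mul (y : ℝ) (hy : 0 < y) :
    sqrtNeg (Complex.I * y) = (Real.sqrt (y/2) : ℂ) * (1 - Complex.I) := by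
  have h1 : -(Complex.I * y) = (y : ℂ) * (-Complex.I) := by ring
  have habs : ‖((y : ℂ) * (-Complex.I))‖ = y := by
    simp [abs_of_pos hy]
  have harg : Complex.arg ((y : ℂ) * (-Complex.I)) = -(π/2) := by
    rw [Complex.arg_real_mul _ hy, Complex.arg_neg_I]
  have hlog : Complex.log ((y : ℂ) * (-Complex.I)) =
      (Real.log y : ℂ) + (-(π/2) : ℝ) * Complex.I := by
    rw [Complex.log, habs, harg]
  rw [sqrtNeg, h1, hlog]
  have : ((Real.log y : ℂ) + (-(π/2) : ℝ) * Complex.I) / 2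
      = (Real.log y / 2 : ℝ) + (-(π/4) : ℝ) * Complex.I := by
    push_cast; ring
  rw [this, Complex.exp_add, Complex.exp_mul_I]
  have he : Complex.exp ((Real.log y / 2 : ℝ)) = (Real.sqrt y : ℂ) := by
    rw [← Complex.ofReal_exp]
    norm_cast
    rw [Real.sqrt_eq_rpow, Real.rpow_def_of_pos hy]
    ring_nf
  rw [he]
  have hc : Complex.cos ((-(π/4) : ℝ)) = ((Real.sqrt 2 / 2 : ℝ) : ℂ) := by
    rw [← Complex.ofReal_cos]; norm_num [Real.cos_pi_div_four]
  have hsn : Complex.sin ((-(π/4) : ℝ)) = ((-(Real.sqrt 2 / 2) : ℝ) : ℂ) := by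
    rw [← Complex.ofReal_sin]; norm_num [Real.sin_pi_div_four]
  rw [hc, hsn]
  have hs2 : Real.sqrt 2 * Real.sqrt 2 = 2 := Real.mul_self_sqrt (by norm_num)
  have h2 : Real.sqrt (y/2) = Real.sqrt y * (Real.sqrt 2 / 2) := by
    rw [show y/2 = y * (Real.sqrt 2 / 2)^2 by rw [div_pow, sq, hs2]; ring,
      Real.sqrt_mul hy.le, Real.sqrt_sq (by positivity)]
  rw [h2]; push_cast; ring


lemma mFun_I_mul (y : ℝ) (hy : 0 < y) :
    mFun (Complex.I * y) =
      (((1 + Real.sqrt (y/2))/(1 + y + 2*Real.sqrt (y/2)) : ℝ) : ℂ) +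
      ((1/y + y/(2*Real.sqrt (y/2)*(1 + y + 2*Real.sqrt (y/2))) : ℝ) : ℂ) * Complex.I := by
  rw [mFun, sqrtNeg_I_mul y hy]
  set s := Real.sqrt (y/2) with hsdef
  have hs : 0 < s := Real.sqrt_pos.mpr (by linarith)
  have hyr : y = 2*s^2 := by
    rw [hsdef, Real.sq_sqrt (by linarith : (0:ℝ) ≤ y/2)]; ring
  rw [hyr]
  clear_value s
  clear hsdef hyr hy
  have hs0 : (s : ℂ) ≠ 0 := by exact_mod_cast hs.ne'
  have hD : (0:ℝ) < 1 + 2*s + 2*s^2 := by positivity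
  have hD0 : (1 + 2*s + 2*s^2 : ℝ) ≠ 0 := hD.ne'
  have t1 : -1 / (Complex.I * ((2*s^2 : ℝ) : ℂ)) = ((1/(2*s^2) : ℝ) : ℂ) * Complex.I := by
    rw [div_eq_iff (by simp [hs0] : Complex.I * ((2*s^2 : ℝ) : ℂ) ≠ 0)]
    have : ((1/(2*s^2) : ℝ) : ℂ) * (2*s^2 : ℝ) = 1 := by
      have : (1/(2*s^2) : ℝ) * (2*s^2) = 1 := one_div_mul_cancel (by positivity)
      exact_mod_cast this
    calc (-1 : ℂ) = ((1/(2*s^2) : ℝ) : ℂ) * (2*s^2 : ℝ) * (Complex.I * Complex.I) := by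
          rw [this, Complex.I_mul_I]; ring
      _ = ((1/(2*s^2) : ℝ) : ℂ) * Complex.I * (Complex.I * ((2*s^2 : ℝ) : ℂ)) := by ring
  have t2 : 1 / ((s : ℂ) * (1 - Complex.I)) = ((1/(2*s) : ℝ) : ℂ) * (1 + Complex.I) := by
    rw [div_eq_iff (by simp [hs0, sub_ne_zero]; intro h; simpa using congrArg Complex.re h.symm :
      (s : ℂ) * (1 - Complex.I) ≠ 0)]
    have h2 : ((1/(2*s) : ℝ) : ℂ) * (2*s : ℝ) = 1 := by
      have : (1/(2*s) : ℝ) * (2*s) = 1 := one_div_mul_cancel (by positivity)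
      exact_mod_cast this
    calc (1 : ℂ) = ((1/(2*s) : ℝ) : ℂ) * (2*s : ℝ) := h2.symm
      _ = ((1/(2*s) : ℝ) : ℂ) * (1 + Complex.I) * ((s : ℂ) * (1 - Complex.I)) := by
          push_cast
          have : Complex.I * Complex.I = -1 := Complex.I_mul_I
          ring_nf
          rw [Complex.I_sq]
          ring
  have hden : -(Complex.I * ((2*s^2 : ℝ) : ℂ)) + (s : ℂ) * (1 - Complex.I) ≠ 0 := by
    intro h
    have h2 := congrArg Complex.re h
    push_cast at h2
    simp [Complex.mul_re, Complex.mul_im, pow_two] at h2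
    exact hs.ne' h2
  have t3 : 1 / (-(Complex.I * ((2*s^2 : ℝ) : ℂ)) + (s : ℂ) * (1 - Complex.I)) =
      ((1/(2*s*(1 + 2*s + 2*s^2)) : ℝ) : ℂ) * (1 + (1 + 2*s : ℝ) * Complex.I) := by
    rw [div_eq_iff hden]
    have h2 : ((1/(2*s*(1 + 2*s + 2*s^2)) : ℝ) : ℂ) * ((2*s*(1 + 2*s + 2*s^2) : ℝ) : ℂ) = 1 := by
      have : (1/(2*s*(1 + 2*s + 2*s^2)) : ℝ) * (2*s*(1 + 2*s + 2*s^2)) = 1 :=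
        one_div_mul_cancel (by positivity)
      exact_mod_cast this
    calc (1 : ℂ) = ((1/(2*s*(1 + 2*s + 2*s^2)) : ℝ) : ℂ) * ((2*s*(1 + 2*s + 2*s^2) : ℝ) : ℂ) := h2.symm
      _ = ((1/(2*s*(1 + 2*s + 2*s^2)) : ℝ) : ℂ) * (1 + (1 + 2*s : ℝ) * Complex.I) *
            (-(Complex.I * ((2*s^2 : ℝ) : ℂ)) + (s : ℂ) * (1 - Complex.I)) := by
          push_cast
          ring_nf
          rw [Complex.I_sq]
          ring
  rw [t1, t2, t3]
  have e1 : (1 + 2*s^2 + 2*s : ℝ) = 1 + 2*s + 2*s^2 := by ring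
  rw [e1]
  rw [show ((1 + s)/(1 + 2*s + 2*s^2) : ℝ) = 1/(2*s) - 1/(2*s*(1 + 2*s + 2*s^2)) by
    field_simp; ring]
  rw [show (1/(2*s^2) + 2*s^2/(2*s*(1 + 2*s + 2*s^2)) : ℝ)
      = 1/(2*s^2) + 1/(2*s) - (1 + 2*s)/(2*s*(1 + 2*s + 2*s^2)) by
    field_simp; ring]
  push_cast
  ring


lemma sqrt_two_mul (y : ℝ) (hy : 0 < y) : Real.sqrt (2*y) = 2 * Real.sqrt (y/2) := by
  rw [show (2*y : ℝ) = 2^2 * (y/2) by ring, Real.sqrt_mul (by positivity),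
    Real.sqrt_sq (by norm_num)]

/-- For `y > 0`: `Im m(iy) ≥ 1/y`, `Re m(iy) = (1+√(y/2))/(1+y+√(2y))`, and
`Im m(iy)/Re m(iy) → +∞` as `y → 0+`. -/
theorem stmt_6 :
    (∀ y : ℝ, 0 < y →
      1 / y ≤ (mFun (Complex.I * y)).im ∧
      (mFun (Complex.I * y)).re =
        (1 + Real.sqrt (y / 2)) / (1 + y + Real.sqrt (2 * y))) ∧
    Tendsto (fun y : ℝ => (mFun (Complex.I * y)).im / (mFun (Complex.I * y)).re)
      (nhdsWithin 0 (Ioi 0)) atTop := by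
  have main : ∀ y : ℝ, 0 < y →
      (mFun (Complex.I * y)).re = (1 + Real.sqrt (y/2))/(1 + y + 2*Real.sqrt (y/2)) ∧
      (mFun (Complex.I * y)).im
        = 1/y + y/(2*Real.sqrt (y/2)*(1 + y + 2*Real.sqrt (y/2))) := by
    intro y hy
    rw [mFun_I_mul y hy]
    constructor <;>
      simp only [Complex.add_re, Complex.add_im, Complex.mul_re, Complex.mul_im,
        Complex.ofReal_re, Complex.ofReal_im, Complex.I_re, Complex.I_im] <;> ring
  have him : ∀ y : ℝ, 0 < y → 1 / y ≤ (mFun (Complex.I * y)).im := by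
    intro y hy
    rw [(main y hy).2]
    have hs : 0 < Real.sqrt (y/2) := Real.sqrt_pos.mpr (by linarith)
    have : 0 ≤ y/(2*Real.sqrt (y/2)*(1 + y + 2*Real.sqrt (y/2))) := by positivity
    linarith
  refine ⟨fun y hy => ⟨him y hy, by rw [(main y hy).1, sqrt_two_mul y hy]⟩, ?_⟩
  refine tendsto_atTop_mono' _ ?_ tendsto_inv_nhdsGT_zero
  filter_upwards [self_mem_nhdsWithin] with y hy
  have hy : 0 < y := hy
  have hs : 0 < Real.sqrt (y/2) := Real.sqrt_pos.mpr (by linarith)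
  set s := Real.sqrt (y/2)
  have hre : (mFun (Complex.I * y)).re = (1+s)/(1+y+2*s) := (main y hy).1
  have hrepos : 0 < (mFun (Complex.I * y)).re := by rw [hre]; positivity
  have hrele : (mFun (Complex.I * y)).re ≤ 1 := by
    rw [hre, div_le_one (by positivity)]
    linarith
  have h1 : 1/y ≤ (mFun (Complex.I * y)).im := him y hy
  rw [le_div_iff₀ hrepos, ← one_div y]
  calc 1/y * (mFun (Complex.I * y)).re ≤ 1/y * 1 := by
        apply mul_le_mul_of_nonneg_left hrele (by positivity)
    _ ≤ (mFun (Complex.I * y)).im := by linarith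
end

section
/- The function m_∞(λ) = -1/λ - √(-λ) admits for λ ∉ [0,∞) the representation m_∞(λ) = -1/√2 + ∫₀^∞ (1/(s-λ) - s/(1+s²)) dτ_∞(s), where dτ_∞ is a unit point mass at 0 plus the density (1/π)√s ds on (0,∞). -/
open MeasureTheory Real Set

open Filter

open scoped Topology

noncomputable def Gc (c : ℂ) (t : ℝ) : ℂ :=
  (2 * Complex.I * c)⁻¹ * Complex.log ((c + Complex.I * t) / (c - Complex.I * t))

lemma Gc_add_ne (c : ℂ) (hc : 0 < c.re) (t : ℝ) : c + Complex.I * t ≠ 0 := by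
  intro h
  have : (c + Complex.I * t).re = 0 := by rw [h]; simp
  simp at this; exact hc.ne' this

lemma Gc_sub_ne (c : ℂ) (hc : 0 < c.re) (t : ℝ) : c - Complex.I * t ≠ 0 := by
  intro h
  have : (c - Complex.I * t).re = 0 := by rw [h]; simp
  simp at this; exact hc.ne' this

lemma Gc_q_im (c : ℂ) (t : ℝ) :
    ((c + Complex.I * t) / (c - Complex.I * t)).im
      = 2 * t * c.re / Complex.normSq (c - Complex.I * t) := by
  rw [Complex.div_im]
  simp [Complex.normSq]
  ring

lemma Gc_q_slit (c : ℂ) (hc : 0 < c.re) (t : ℝ) :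
    (c + Complex.I * t) / (c - Complex.I * t) ∈ Complex.slitPlane := by
  rcases eq_or_ne t 0 with rfl | ht
  · simp only [Complex.ofReal_zero, mul_zero, add_zero, sub_zero]
    rw [div_self (fun h => hc.ne' (by rw [h]; simp))]
    exact Complex.one_mem_slitPlane
  · rw [Complex.mem_slitPlane_iff]
    right
    rw [Gc_q_im]
    have hns : Complex.normSq (c - Complex.I * t) ≠ 0 :=
      (Complex.normSq_pos.2 (Gc_sub_ne c hc t)).ne'
    exact div_ne_zero (by positivity) hns

lemma Gc_sq_ne (c : ℂ) (hc : 0 < c.re) (t : ℝ) : ((t : ℂ)^2 + c^2) ≠ 0 := by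
  have h : ((t : ℂ)^2 + c^2) = (c - Complex.I * t) * (c + Complex.I * t) := by
    have : (Complex.I : ℂ)^2 = -1 := Complex.I_sq
    ring_nf
    rw [this]; ring
  rw [h]
  exact mul_ne_zero (Gc_sub_ne c hc t) (Gc_add_ne c hc t)

lemma hasDerivAt_Gc (c : ℂ) (hc : 0 < c.re) (t : ℝ) :
    HasDerivAt (Gc c) (((t : ℂ)^2 + c^2)⁻¹) t := by
  have hid : HasDerivAt (fun t : ℝ => (t : ℂ)) 1 t := by
    exact Complex.ofRealCLM.hasDerivAt (x := t)
  have hnum : HasDerivAt (fun t : ℝ => c + Complex.I * (t : ℂ)) Complex.I t := by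
    simpa using (hid.const_mul Complex.I).const_add c
  have hden : HasDerivAt (fun t : ℝ => c - Complex.I * (t : ℂ)) (-Complex.I) t := by
    simpa using (hid.const_mul Complex.I).const_sub c
  have hq := hnum.div hden (Gc_sub_ne c hc t)
  have hlog := hq.clog_real (Gc_q_slit c hc t)
  have := hlog.const_mul ((2 * Complex.I * c)⁻¹)
  refine this.congr_deriv ?_
  have h1 := Gc_add_ne c hc t
  have h2 := Gc_sub_ne c hc t
  have h3 := Gc_sq_ne c hc t
  have hcne : c ≠ 0 := fun h => hc.ne' (by rw [h]; simp)
  have hI : Complex.I ≠ 0 := Complex.I_ne_zero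
  have hIsq : (Complex.I : ℂ)^2 = -1 := Complex.I_sq
  simp only [Pi.div_apply]
  rw [show (t:ℂ)^2 + c^2 = (c - Complex.I * t) * (c + Complex.I * t) by
    linear_combination (t:ℂ)^2 * hIsq]
  field_simp
  ring

lemma Gc_zero (c : ℂ) (hc : 0 < c.re) : Gc c 0 = 0 := by
  have hcne : c ≠ 0 := fun h => hc.ne' (by rw [h]; simp)
  simp [Gc, div_self hcne]

lemma tendsto_Gc (c : ℂ) (hc : 0 < c.re) :
    Tendsto (Gc c) atTop (𝓝 ((π : ℂ) / (2 * c))) := by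
  have hcne : c ≠ 0 := fun h => hc.ne' (by rw [h]; simp)
  have hinv : Tendsto (fun t : ℝ => c * (((t : ℝ)⁻¹ : ℝ) : ℂ)) atTop (𝓝 0) := by
    have h1 : Tendsto (fun t : ℝ => (((t : ℝ)⁻¹ : ℝ) : ℂ)) atTop (𝓝 ((0 : ℝ) : ℂ)) :=
      (Complex.continuous_ofReal.tendsto _).comp tendsto_inv_atTop_zero
    simpa [Function.comp] using h1.const_mul c
  have hq0 : Tendsto (fun t : ℝ => (c * (((t : ℝ)⁻¹ : ℝ) : ℂ) + Complex.I)
      / (c * (((t : ℝ)⁻¹ : ℝ) : ℂ) - Complex.I)) atTop (𝓝 (-1)) := by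
    have hA : Tendsto (fun t : ℝ => c * (((t : ℝ)⁻¹ : ℝ) : ℂ) + Complex.I) atTop
        (𝓝 (0 + Complex.I)) := hinv.add tendsto_const_nhds
    have hB : Tendsto (fun t : ℝ => c * (((t : ℝ)⁻¹ : ℝ) : ℂ) - Complex.I) atTop
        (𝓝 (0 - Complex.I)) := hinv.sub tendsto_const_nhds
    have := hA.div hB (by simp [Complex.I_ne_zero])
    rw [zero_add, zero_sub, div_neg, div_self Complex.I_ne_zero] at this
    exact this
  have heq : ∀ᶠ t : ℝ in atTop,
      (c * (((t : ℝ)⁻¹ : ℝ) : ℂ) + Complex.I) / (c * (((t : ℝ)⁻¹ : ℝ) : ℂ) - Complex.I)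
        = (c + Complex.I * t) / (c - Complex.I * t) := by
    filter_upwards [eventually_gt_atTop (0 : ℝ)] with t ht
    have htne : ((t : ℝ) : ℂ) ≠ 0 := by exact_mod_cast ht.ne'
    have hsub := Gc_sub_ne c hc t
    have hd : c * (((t : ℝ)⁻¹ : ℝ) : ℂ) - Complex.I ≠ 0 := by
      intro h
      apply hsub
      have key : c - Complex.I * t = (c * (((t : ℝ)⁻¹ : ℝ) : ℂ) - Complex.I) * t := by
        push_cast
        field_simp
      rw [key, h, zero_mul]
    rw [div_eq_div_iff hd hsub]
    push_cast
    field_simp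
    try ring
    try tauto
  have hq : Tendsto (fun t : ℝ => (c + Complex.I * t) / (c - Complex.I * t)) atTop (𝓝 (-1)) :=
    hq0.congr' heq
  have hmem : ∀ᶠ t : ℝ in atTop,
      (c + Complex.I * t) / (c - Complex.I * t) ∈ { z : ℂ | 0 ≤ z.im } := by
    filter_upwards [eventually_gt_atTop (0 : ℝ)] with t ht
    show 0 ≤ ((c + Complex.I * t) / (c - Complex.I * t)).im
    rw [Gc_q_im]
    have := Complex.normSq_nonneg (c - Complex.I * t)
    have h2 : 0 ≤ 2 * t * c.re := by positivity
    exact div_nonneg h2 this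
  have hqin : Tendsto (fun t : ℝ => (c + Complex.I * t) / (c - Complex.I * t)) atTop
      (𝓝[{ z : ℂ | 0 ≤ z.im }] (-1)) :=
    tendsto_nhdsWithin_iff.2 ⟨hq, hmem⟩
  have hloglim := (Complex.tendsto_log_nhdsWithin_im_nonneg_of_re_neg_of_im_zero
    (by norm_num : (-1 : ℂ).re < 0) (by simp)).comp hqin
  have hval : (↑(Real.log ‖(-1:ℂ)‖) : ℂ) + π * Complex.I = π * Complex.I := by simp
  rw [hval] at hloglim
  have hfin := hloglim.const_mul ((2 * Complex.I * c)⁻¹)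
  have heq2 : (2 * Complex.I * c)⁻¹ * ((π : ℂ) * Complex.I) = (π : ℂ) / (2 * c) := by
    have hI : Complex.I ≠ 0 := Complex.I_ne_zero
    field_simp
    try simp [Complex.I_sq]
    try ring
  rw [heq2] at hfin
  exact hfin

/-- For `λ ∉ [0,∞)`:
`-1/λ - √(-λ) = -1/√2 + (-1/λ) + ∫₀^∞ (1/(s-λ) - s/(1+s²))·(√s/π) ds`
(the point mass at `0` contributing the term `-1/λ`). -/
theorem stmt_12 (z : ℂ) (hz : ∀ s : ℝ, 0 ≤ s → z ≠ (s : ℂ)) :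
    -1 / z - sqrtNeg z =
      ((-(1 / Real.sqrt 2) : ℝ) : ℂ) + (-1 / z) +
        ∫ s in Ioi (0 : ℝ),
          (1 / ((s : ℂ) - z) - (s : ℂ) / (1 + (s : ℂ) ^ 2)) *
            ((Real.sqrt s / π : ℝ) : ℂ) := by
  have hz0 : z ≠ 0 := by simpa using hz 0 le_rfl
  have hnz : -z ≠ 0 := neg_ne_zero.2 hz0
  set w := sqrtNeg z with hw
  -- basic properties of w
  have hw2 : w ^ 2 = -z := by
    rw [hw, sqrtNeg, ← Complex.exp_nat_mul]
    rw [show (2 : ℕ) * (Complex.log (-z) / 2) = Complex.log (-z) by push_cast; ring]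
    exact Complex.exp_log hnz
  have hargne : Complex.arg (-z) ≠ π := by
    intro h
    rw [Complex.arg_eq_pi_iff] at h
    obtain ⟨h1, h2⟩ := h
    have hre : 0 < z.re := by simpa using h1
    have him : z.im = 0 := by simpa using h2
    exact hz z.re hre.le (Complex.ext (by simp) (by simp [him]))
  have hwre : 0 < w.re := by
    rw [hw, sqrtNeg, Complex.exp_re]
    have him : (Complex.log (-z) / 2).im = Complex.arg (-z) / 2 := by
      rw [show (2 : ℂ) = ((2 : ℝ) : ℂ) by norm_num, Complex.div_ofReal_im, Complex.log_im]
    rw [him]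
    have h1 : -π < Complex.arg (-z) := Complex.neg_pi_lt_arg _
    have h2 : Complex.arg (-z) < π := lt_of_le_of_ne (Complex.arg_le_pi _) hargne
    have hcos : 0 < Real.cos (Complex.arg (-z) / 2) := by
      apply Real.cos_pos_of_mem_Ioo
      constructor <;> [linarith; linarith]
    positivity
  have hwne : w ≠ 0 := fun h => hwre.ne' (by rw [h]; simp)
  -- the constants cm, cp
  set a : ℝ := Real.sqrt 2 with ha
  have ha0 : a ≠ 0 := by positivity
  have ha2 : ((a : ℝ) : ℂ) ^ 2 = 2 := by
    rw [← Complex.ofReal_pow, Real.sq_sqrt (by norm_num : (0:ℝ) ≤ 2)]; norm_num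
  have hI2 : Complex.I ^ 2 = -1 := Complex.I_sq
  set cp : ℂ := ((a / 2 : ℝ) : ℂ) * (1 + Complex.I) with hcp
  set cm : ℂ := ((a / 2 : ℝ) : ℂ) * (1 - Complex.I) with hcm
  have hapos : 0 < a := by rw [ha]; positivity
  have hcpre : 0 < cp.re := by
    rw [hcp]; simp [Complex.mul_re]; positivity
  have hcmre : 0 < cm.re := by
    rw [hcm]; simp [Complex.mul_re]; positivity
  have hcp2 : cp ^ 2 = Complex.I := by
    rw [hcp]; push_cast
    linear_combination ((1 + Complex.I)^2/4) * ha2 + (1/2 : ℂ) * hI2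
  have hcm2 : cm ^ 2 = -Complex.I := by
    rw [hcm]; push_cast
    linear_combination ((1 - Complex.I)^2/4) * ha2 + (1/2 : ℂ) * hI2
  have hcmcp : cm * cp = 1 := by
    rw [hcm, hcp]; push_cast
    linear_combination ((1 - Complex.I^2)/4) * ha2 - (1/2 : ℂ) * hI2
  have hdiff : cp - cm = (a : ℂ) * Complex.I := by
    rw [hcm, hcp]; push_cast; ring
  have hcp0 : cp ≠ 0 := fun h => hcpre.ne' (by rw [h]; simp)
  have hcm0 : cm ≠ 0 := fun h => hcmre.ne' (by rw [h]; simp)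
  have hπ : (π : ℂ) ≠ 0 := by exact_mod_cast Real.pi_ne_zero
  -- the antiderivative
  set F : ℝ → ℂ := fun s => (π : ℂ)⁻¹ *
    (2 * z * Gc w (Real.sqrt s) +
      (Complex.I)⁻¹ * (Gc cm (Real.sqrt s) - Gc cp (Real.sqrt s))) with hF
  set f : ℝ → ℂ := fun s => (1 / ((s : ℂ) - z) - (s : ℂ) / (1 + (s : ℂ) ^ 2)) *
            ((Real.sqrt s / π : ℝ) : ℂ) with hf
  -- derivative
  have hderiv : ∀ s ∈ Ioi (0 : ℝ), HasDerivAt F (f s) s := by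
    intro s hs
    rw [mem_Ioi] at hs
    have hst : Real.sqrt s ≠ 0 := (Real.sqrt_pos.2 hs).ne'
    have hG : HasDerivAt (fun t : ℝ => 2 * z * Gc w t +
        (Complex.I)⁻¹ * (Gc cm t - Gc cp t))
        (2 * z * (((Real.sqrt s : ℝ) : ℂ) ^ 2 + w ^ 2)⁻¹ +
          (Complex.I)⁻¹ * ((((Real.sqrt s : ℝ) : ℂ) ^ 2 + cm ^ 2)⁻¹ -
            (((Real.sqrt s : ℝ) : ℂ) ^ 2 + cp ^ 2)⁻¹)) (Real.sqrt s) :=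
      ((hasDerivAt_Gc w hwre _).const_mul (2 * z)).add
        (((hasDerivAt_Gc cm hcmre _).sub (hasDerivAt_Gc cp hcpre _)).const_mul (Complex.I)⁻¹)
    have hsq := Real.hasDerivAt_sqrt hs.ne'
    have hcomp := (hG.scomp s hsq).const_mul ((π : ℂ)⁻¹)
    have hFs : F = fun s : ℝ => (π : ℂ)⁻¹ * ((fun t : ℝ => 2 * z * Gc w t +
        (Complex.I)⁻¹ * (Gc cm t - Gc cp t)) ∘ Real.sqrt) s := by
      funext u; simp [hF, Function.comp]
    rw [hFs]
    refine hcomp.congr_deriv ?_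
    -- now the algebraic identity
    rw [hw2, hcm2, hcp2]
    have hss : ((Real.sqrt s : ℝ) : ℂ) ^ 2 = (s : ℂ) := by
      rw [← Complex.ofReal_pow, Real.sq_sqrt hs.le]
    have hsz : (s : ℂ) - z ≠ 0 := sub_ne_zero.2 fun h => hz s hs.le h.symm
    have h1s : 1 + (s : ℂ) ^ 2 ≠ 0 := by
      rw [show 1 + (s:ℂ)^2 = ((1 + s^2 : ℝ) : ℂ) by push_cast; ring]
      exact_mod_cast (by positivity : (1 + s^2 : ℝ) ≠ 0)
    rw [Complex.real_smul]
    simp only [hf]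
    rw [← hss] at hsz h1s ⊢
    push_cast
    set u : ℂ := ((Real.sqrt s : ℝ) : ℂ) with hu
    have hune : u ≠ 0 := by
      rw [hu]; exact_mod_cast hst
    have hu2I : u ^ 2 + -Complex.I ≠ 0 := by
      rw [hss]; intro h
      have := congrArg Complex.im h
      simp at this
    have hu2I' : u ^ 2 + Complex.I ≠ 0 := by
      rw [hss]; intro h
      have := congrArg Complex.im h
      simp at this
    have hu2Im : u ^ 2 - Complex.I ≠ 0 := by rw [sub_ne_zero]; intro h; exact hu2I (by rw [h]; ring)
    have hkey : Complex.I⁻¹ * ((u ^ 2 - Complex.I)⁻¹ - (u ^ 2 + Complex.I)⁻¹)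
        = 2 / (1 + (u ^ 2) ^ 2) := by
      rw [eq_div_iff h1s]
      field_simp [Complex.I_ne_zero, hu2Im, hu2I']
      linear_combination (2 * Complex.I) * hI2
    rw [show u ^ 2 + -z = u ^ 2 - z from by ring,
       show u ^ 2 + -Complex.I = u ^ 2 - Complex.I from by ring, hkey]
    field_simp [hune, hsz, h1s, hπ]
    have h1s' : 1 + u ^ 4 ≠ 0 := by rw [show u ^ 4 = (u ^ 2) ^ 2 by ring]; exact h1s
    field_simp
    ring
  -- continuity of F at 0⁺
  have hFcont : Continuous F := by
    have hGc : ∀ c : ℂ, 0 < c.re → Continuous (Gc c) := fun c hc =>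
      continuous_iff_continuousAt.2 fun t => (hasDerivAt_Gc c hc t).continuousAt
    apply Continuous.mul continuous_const
    exact (continuous_const.mul ((hGc w hwre).comp Real.continuous_sqrt)).add
      (continuous_const.mul (((hGc cm hcmre).comp Real.continuous_sqrt).sub
        ((hGc cp hcpre).comp Real.continuous_sqrt)))
  have hF0 : F 0 = 0 := by
    simp [hF, Real.sqrt_zero, Gc_zero w hwre, Gc_zero cm hcmre, Gc_zero cp hcpre]
  -- limit at infinity
  have hsqrtTop : Tendsto Real.sqrt atTop atTop :=
    (tendsto_rpow_atTop (by norm_num : (0:ℝ) < 1/2)).congr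
      (fun x => (Real.sqrt_eq_rpow x).symm)
  set M : ℂ := (π : ℂ)⁻¹ * (2 * z * ((π : ℂ) / (2 * w)) +
      (Complex.I)⁻¹ * ((π : ℂ) / (2 * cm) - (π : ℂ) / (2 * cp))) with hM
  have htop : Tendsto F atTop (𝓝 M) := by
    have h1 := (tendsto_Gc w hwre).comp hsqrtTop
    have h2 := (tendsto_Gc cm hcmre).comp hsqrtTop
    have h3 := (tendsto_Gc cp hcpre).comp hsqrtTop
    have := ((h1.const_mul (2*z)).add ((h2.sub h3).const_mul ((Complex.I)⁻¹))).const_mul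
      ((π : ℂ)⁻¹)
    simpa [hF, hM, Function.comp] using this
  -- value of M
  have hMval : M = ((1 / Real.sqrt 2 : ℝ) : ℂ) - w := by
    have e1 : (π : ℂ) / (2 * cm) - (π : ℂ) / (2 * cp)
        = (π : ℂ) * (cp - cm) / (2 * (cm * cp)) := by
      field_simp
    rw [hM, e1, hcmcp, hdiff]
    push_cast
    have haC : ((a : ℝ) : ℂ) ≠ 0 := by exact_mod_cast ha0
    field_simp [Complex.I_ne_zero]
    have e : ((a:ℝ):ℂ) = ((√2:ℝ):ℂ) := rfl
    linear_combination (2*((√2:ℝ):ℂ)) * hw2 + w * ha2 - w * ((a:ℝ):ℂ) * e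
  -- integrability
  have hfmCont : ContinuousOn f (Ici 0) := by
    have hco : Continuous (fun s : ℝ => (s : ℂ)) := Complex.continuous_ofReal
    have hc1 : ContinuousOn (fun s : ℝ => 1 / ((s : ℂ) - z)) (Ici 0) := by
      apply ContinuousOn.div continuousOn_const ((hco.sub continuous_const).continuousOn)
      intro s hs
      exact sub_ne_zero.2 fun h => hz s hs h.symm
    have hc2 : ContinuousOn (fun s : ℝ => (s : ℂ) / (1 + (s : ℂ) ^ 2)) (Ici 0) := by
      apply ContinuousOn.div hco.continuousOn
        ((continuous_const.add (hco.pow 2)).continuousOn)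
      intro s _
      show 1 + (s:ℂ)^2 ≠ 0
      rw [show 1 + (s:ℂ)^2 = ((1 + s^2 : ℝ) : ℂ) by push_cast; ring]
      exact_mod_cast (by positivity : (1 + s^2 : ℝ) ≠ 0)
    have hc3 : Continuous (fun s : ℝ => ((Real.sqrt s / π : ℝ) : ℂ)) :=
      hco.comp (Real.continuous_sqrt.div_const π)
    exact ((hc1.sub hc2).mul hc3.continuousOn)
  set b : ℝ := max 2 (2 * ‖z‖) with hb
  have hb2 : (2:ℝ) ≤ b := le_max_left _ _
  have hbz : 2 * ‖z‖ ≤ b := le_max_right _ _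
  have hbpos : (0:ℝ) < b := lt_of_lt_of_le (by norm_num) hb2
  have hint : IntegrableOn f (Ioi 0) := by
    have hpart1 : IntegrableOn f (Ioc 0 b) := by
      have h : IntegrableOn f (Icc 0 b) volume :=
        (hfmCont.mono (Icc_subset_Ici_self : Icc (0:ℝ) b ⊆ Ici 0)).integrableOn_Icc
      exact h.mono_set Ioc_subset_Icc_self
    have hpart2 : IntegrableOn f (Ioi b) := by
      set C : ℝ := 2 * (1 + ‖z‖) * (1/π) with hC
      have hg : IntegrableOn (fun s : ℝ => C * s ^ (-(3/2) : ℝ)) (Ioi b) :=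
        (integrableOn_Ioi_rpow_of_lt (by norm_num) hbpos).const_mul C
      apply Integrable.mono' hg
      · exact (hfmCont.mono (fun x hx => (hbpos.trans hx).le : Ioi b ⊆ Ici 0)).aestronglyMeasurable
          measurableSet_Ioi
      · rw [ae_restrict_iff' measurableSet_Ioi]
        filter_upwards with s hsb
        rw [mem_Ioi] at hsb
        have hs2 : (2:ℝ) ≤ s := le_of_lt (lt_of_le_of_lt hb2 hsb)
        have hspos : (0:ℝ) < s := by linarith
        have hsz2 : 2 * ‖z‖ ≤ s := le_of_lt (lt_of_le_of_lt hbz hsb)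
        have hszne : (s : ℂ) - z ≠ 0 := sub_ne_zero.2 fun h => hz s hspos.le h.symm
        have h1sne : 1 + (s : ℂ) ^ 2 ≠ 0 := by
          rw [show 1 + (s:ℂ)^2 = ((1 + s^2 : ℝ) : ℂ) by push_cast; ring]
          exact_mod_cast (by positivity : (1 + s^2 : ℝ) ≠ 0)
        have hcomb : 1 / ((s : ℂ) - z) - (s : ℂ) / (1 + (s : ℂ) ^ 2)
            = (1 + (s : ℂ) * z) / (((s : ℂ) - z) * (1 + (s : ℂ) ^ 2)) := by
          field_simp
          ring
        have hnum : ‖1 + (s : ℂ) * z‖ ≤ (1 + ‖z‖) * s := by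
          calc ‖1 + (s : ℂ) * z‖ ≤ ‖(1:ℂ)‖ + ‖(s:ℂ) * z‖ :=
                norm_add_le _ _
            _ = 1 + s * ‖z‖ := by
                simp [abs_of_pos hspos]
            _ ≤ s + s * ‖z‖ := by linarith
            _ = (1 + ‖z‖) * s := by ring
        have hd1 : s / 2 ≤ ‖(s : ℂ) - z‖ := by
          have h1 : ‖(s : ℂ)‖ - ‖z‖ ≤ ‖(s:ℂ) - z‖ := by
            simpa using norm_sub_norm_le ((s:ℂ)) z
          have h2 : ‖(s : ℂ)‖ = s := by simp [abs_of_pos hspos]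
          rw [h2] at h1
          have h3 : ‖z‖ ≤ s / 2 := by linarith
          linarith
        have hd2 : s ^ 2 ≤ ‖1 + (s : ℂ) ^ 2‖ := by
          rw [show 1 + (s:ℂ)^2 = ((1 + s^2 : ℝ) : ℂ) by push_cast; ring,
            Complex.norm_real, Real.norm_eq_abs, abs_of_pos (by positivity : (0:ℝ) < 1 + s^2)]
          nlinarith
        have hquot : ‖1 / ((s : ℂ) - z) - (s : ℂ) / (1 + (s : ℂ) ^ 2)‖
            ≤ (1 + ‖z‖) * s / ((s/2) * s^2) := by
          rw [hcomb, norm_div, norm_mul]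
          apply div_le_div₀ (by positivity) hnum (by positivity)
          exact mul_le_mul hd1 hd2 (by positivity) (norm_nonneg _)
        have hπpos : (0:ℝ) < π := Real.pi_pos
        have hrp : Real.sqrt s / s ^ 2 = s ^ (-(3/2) : ℝ) := by
          have h32 : s ^ (-(3/2) : ℝ) = s ^ ((1/2 : ℝ) - 2) := by norm_num
          rw [h32, Real.rpow_sub hspos, Real.sqrt_eq_rpow, Real.rpow_two]
        have hfs : ‖f s‖ = ‖1/((s:ℂ)-z) - (s:ℂ)/(1+(s:ℂ)^2)‖ * (Real.sqrt s / π) := by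
          simp only [hf]
          rw [norm_mul, Complex.norm_real, Real.norm_eq_abs,
            abs_of_nonneg (by positivity : (0:ℝ) ≤ Real.sqrt s / π)]
        calc ‖f s‖ = ‖1/((s:ℂ)-z) - (s:ℂ)/(1+(s:ℂ)^2)‖ * (Real.sqrt s / π) := hfs
          _ ≤ ((1 + ‖z‖) * s / ((s/2) * s^2)) * (Real.sqrt s / π) :=
              mul_le_mul_of_nonneg_right hquot (by positivity)
          _ = C * (Real.sqrt s / s^2) := by rw [hC]; field_simp
          _ = C * s ^ (-(3/2) : ℝ) := by rw [hrp]
    have : IntegrableOn f (Ioc 0 b ∪ Ioi b) := hpart1.union hpart2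
    apply this.mono_set
    intro x hx
    rw [mem_Ioi] at hx
    rcases le_or_gt x b with h | h
    · exact Or.inl (mem_Ioc.2 ⟨hx, h⟩)
    · exact Or.inr (mem_Ioi.2 h)
  -- conclude
  have hInt := integral_Ioi_of_hasDerivAt_of_tendsto
    (hFcont.continuousWithinAt) hderiv hint htop
  rw [hF0, sub_zero] at hInt
  have : (∫ s in Ioi (0:ℝ), (1 / ((s : ℂ) - z) - (s : ℂ) / (1 + (s : ℂ) ^ 2)) *
      ((Real.sqrt s / π : ℝ) : ℂ)) = M := hInt
  rw [this, hMval]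
  push_cast
  ring
end
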